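/- Let (ℓₙ) be a sequence of pairwise disjoint, nested (k,c)-quasigeodesic lines in the hyperbolic plane that eventually leaves every compact set. Then there is a single point p of the ideal circle such that ℓₙ converges to p (i.e., for every neighborhood U of p in the compactified disk, ℓₙ ⊂ U for all large n). -/

import Mathlib

/-!
Under the Cayley transform, `dist (cayley z) (cayley w) ≤ 2 exp (-(z | w)_I)`, with `(z | w)_I`
the Gromov product at `I`. Cutting a quasigeodesic into pieces of unit parameter length, the
distance from `I` grows linearly along the pieces away from the closest one, so the image of `ℓₙ`
in the disk has diameter `O(exp (-d(I, ℓₙ) / 4))`, which tends to zero as the lines escape.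
The base points `cayley (ℓₙ 0)` then have a single cluster point `p`: a second one `q ≠ p` would
give a line `ℓₘ` near `q` separating, inside the connected preimage of a small disk around `p`,
an earlier line from a later one. Finally `‖cayley z‖ = tanh (d(z, I) / 2)` puts `p` on the circle.
-/

open UpperHalfPlane

/-- The Cayley transform, identifying the hyperbolic plane (upper half-plane
model) with the open unit disk in ℂ; the ideal circle is the unit circle. -/
noncomputable def cayley (z : UpperHalfPlane) : ℂ :=
  ((z : ℂ) - Complex.I) / ((z : ℂ) + Complex.I)

/-- A `(k, c)`-quasigeodesic line in the hyperbolic plane. -/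
def IsQuasigeodesicLine (k c : ℝ) (ℓ : ℝ → UpperHalfPlane) : Prop :=
  1 ≤ k ∧ 0 ≤ c ∧ ∀ s t : ℝ,
    (1 / k) * |s - t| - c ≤ dist (ℓ s) (ℓ t) ∧ dist (ℓ s) (ℓ t) ≤ k * |s - t| + c

open Real Filter Topology Metric

namespace UpperHalfPlane

lemma coe_add_I_ne_zero (z : ℍ) : (z : ℂ) + Complex.I ≠ 0 := by
  intro h
  have h_im := congrArg Complex.im h
  simp only [Complex.add_im, coe_im, Complex.I_im, Complex.zero_im] at h_im
  linarith [z.im_pos]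

lemma norm_coe_add_I (z : ℍ) :
    ‖(z : ℂ) + Complex.I‖ = 2 * √z.im * cosh (dist z I / 2) := by
  have h := cosh_half_dist z I
  rw [coe_I, Complex.conj_I, I_im, mul_one, Complex.dist_eq, sub_neg_eq_add] at h
  have : √z.im ≠ 0 := by positivity
  rw [h]
  field_simp

lemma norm_coe_sub_coe (z w : ℍ) :
    ‖(z : ℂ) - w‖ = 2 * √z.im * √w.im * sinh (dist z w / 2) := by
  have h₁ : √z.im ≠ 0 := by positivity
  have h₂ : √w.im ≠ 0 := by positivity
  rw [sinh_half_dist, Complex.dist_eq, sqrt_mul z.im_pos.le]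
  field_simp

end UpperHalfPlane

lemma cayley_sub_cayley (z w : ℍ) :
    cayley z - cayley w =
      2 * Complex.I * ((z : ℂ) - w) / (((z : ℂ) + Complex.I) * ((w : ℂ) + Complex.I)) := by
  have := z.coe_add_I_ne_zero
  have := w.coe_add_I_ne_zero
  rw [cayley, cayley]
  field_simp
  ring

lemma dist_cayley (z w : ℍ) :
    dist (cayley z) (cayley w) =
      sinh (dist z w / 2) / (cosh (dist z I / 2) * cosh (dist w I / 2)) := by
  have h₁ : √z.im ≠ 0 := by positivity
  have h₂ : √w.im ≠ 0 := by positivity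
  rw [Complex.dist_eq, cayley_sub_cayley, norm_div, norm_mul, norm_mul, norm_mul,
    Complex.norm_two, Complex.norm_I, norm_coe_sub_coe, norm_coe_add_I, norm_coe_add_I]
  field_simp

lemma dist_cayley_le_exp (z w : ℍ) :
    dist (cayley z) (cayley w) ≤ 2 * exp ((dist z w - dist z I - dist w I) / 2) := by
  have hexp : exp ((dist z w - dist z I - dist w I) / 2) =
      exp (dist z w / 2) * exp (-(dist z I / 2)) * exp (-(dist w I / 2)) := by
    rw [← exp_add, ← exp_add]; ring_nf
  rw [dist_cayley, hexp, div_eq_mul_inv, mul_inv]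
  have hsinh : sinh (dist z w / 2) ≤ exp (dist z w / 2) / 2 := by
    rw [sinh_eq]; linarith [exp_pos (-(dist z w / 2))]
  have hcosh (x : ℝ) : (cosh x)⁻¹ ≤ 2 * exp (-x) := by
    rw [inv_le_iff_one_le_mul₀ (cosh_pos x), cosh_eq, exp_neg]
    have := exp_pos x
    field_simp
    nlinarith [inv_pos.2 this]
  have hsinh_nonneg : 0 ≤ sinh (dist z w / 2) := sinh_nonneg_iff.2 (by positivity)
  calc sinh (dist z w / 2) * ((cosh (dist z I / 2))⁻¹ * (cosh (dist w I / 2))⁻¹)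
      ≤ exp (dist z w / 2) / 2 * (2 * exp (-(dist z I / 2)) * (2 * exp (-(dist w I / 2)))) := by
        gcongr <;> apply hcosh
    _ = _ := by ring

lemma norm_cayley (z : ℍ) : ‖cayley z‖ = tanh (dist z I / 2) := by
  rw [tanh_half_dist, coe_I, Complex.conj_I, Complex.dist_eq, Complex.dist_eq, sub_neg_eq_add,
    cayley, norm_div]

lemma norm_cayley_lt_one (z : ℍ) : ‖cayley z‖ < 1 := by
  rw [norm_cayley]
  exact tanh_lt_one _

lemma one_sub_norm_cayley_le (z : ℍ) : 1 - ‖cayley z‖ ≤ exp (-(dist z I / 2)) := by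
  rw [norm_cayley, tanh_eq_sinh_div_cosh, one_sub_div (cosh_pos _).ne', cosh_sub_sinh]
  exact div_le_self (exp_pos _).le (one_le_cosh _)

/-- The inverse of `cayley` on the unit disk (with junk values outside it). -/
noncomputable def cayleyInv (w : ℂ) : ℍ :=
  ofComplex (Complex.I * (1 + w) / (1 - w))

lemma one_sub_ne_zero_of_norm_lt_one {w : ℂ} (hw : ‖w‖ < 1) : 1 - w ≠ 0 := by
  rintro h
  rw [← sub_eq_zero.1 h, norm_one] at hw
  exact hw.false

lemma im_I_mul_one_add_div_one_sub_pos {w : ℂ} (hw : ‖w‖ < 1) :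
    0 < (Complex.I * (1 + w) / (1 - w)).im := by
  have hns : Complex.normSq w < 1 := by
    rw [← Complex.norm_mul_self_eq_normSq]; nlinarith [norm_nonneg w]
  have him : (Complex.I * (1 + w) / (1 - w)).im =
      (1 - Complex.normSq w) / Complex.normSq (1 - w) := by
    rw [Complex.div_im]
    simp only [Complex.mul_im, Complex.mul_re, Complex.I_re, Complex.I_im, Complex.add_re,
      Complex.add_im, Complex.one_re, Complex.one_im, Complex.sub_re, Complex.sub_im,
      Complex.normSq_apply]
    ring
  rw [him]
  exact div_pos (by linarith) (Complex.normSq_pos.2 (one_sub_ne_zero_of_norm_lt_one hw))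

lemma coe_cayleyInv {w : ℂ} (hw : ‖w‖ < 1) :
    (cayleyInv w : ℂ) = Complex.I * (1 + w) / (1 - w) := by
  rw [cayleyInv, ofComplex_apply_of_im_pos (im_I_mul_one_add_div_one_sub_pos hw), coe_mk]

lemma cayley_cayleyInv {w : ℂ} (hw : ‖w‖ < 1) : cayley (cayleyInv w) = w := by
  have := one_sub_ne_zero_of_norm_lt_one hw
  rw [cayley, coe_cayleyInv hw]
  field_simp
  ring

lemma cayleyInv_cayley (z : ℍ) : cayleyInv (cayley z) = z := by
  have := z.coe_add_I_ne_zero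
  ext
  rw [coe_cayleyInv (norm_cayley_lt_one z), cayley]
  field_simp
  ring

lemma continuousOn_cayleyInv : ContinuousOn cayleyInv (ball 0 1) := by
  rw [isEmbedding_coe.continuousOn_iff]
  refine ContinuousOn.congr (f := fun w ↦ Complex.I * (1 + w) / (1 - w)) ?_
    fun w hw ↦ coe_cayleyInv (mem_ball_zero_iff.1 hw)
  exact (by fun_prop : Continuous fun w : ℂ ↦ Complex.I * (1 + w)).continuousOn.div (by fun_prop)
    fun w hw ↦ one_sub_ne_zero_of_norm_lt_one (mem_ball_zero_iff.1 hw)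

lemma isPreconnected_preimage_cayley {s : Set ℂ} (hs : Convex ℝ s) :
    IsPreconnected (cayley ⁻¹' s) := by
  have himage : cayley ⁻¹' s = cayleyInv '' (s ∩ ball 0 1) := by
    ext z
    refine ⟨fun hz ↦ ⟨cayley z, ⟨hz, mem_ball_zero_iff.2 (norm_cayley_lt_one z)⟩,
      cayleyInv_cayley z⟩, ?_⟩
    rintro ⟨w, ⟨hws, hw⟩, rfl⟩
    rwa [Set.mem_preimage, cayley_cayleyInv (mem_ball_zero_iff.1 hw)]
  rw [himage]
  exact (hs.inter (convex_ball 0 1)).isPreconnected.image _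
    (continuousOn_cayleyInv.mono Set.inter_subset_right)

section Frontier

variable {X : Type*} [TopologicalSpace X]

lemma IsPreconnected.inter_frontier_nonempty {s t : Set X} (hs : IsPreconnected s)
    (hst : (s ∩ t).Nonempty) (hs't : (s \ t).Nonempty) : (s ∩ frontier t).Nonempty := by
  by_contra h
  have hcover : s ⊆ interior t ∪ (closure t)ᶜ := by
    intro x hx
    by_cases hcl : x ∈ closure t
    · exact .inl (by_contra fun hint ↦ h ⟨x, hx, hcl, hint⟩)
    · exact .inr hcl
  obtain ⟨x, -, hint, hcl⟩ := hs _ _ isOpen_interior isClosed_closure.isOpen_compl hcover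
    (hst.mono fun x hx ↦ ⟨hx.1, (hcover hx.1).resolve_right (not_not.2 (subset_closure hx.2))⟩)
    (hs't.mono fun x hx ↦
      ⟨hx.1, (hcover hx.1).resolve_left fun hint ↦ hx.2 (interior_subset hint)⟩)
  exact hcl (interior_subset_closure hint)

lemma disjoint_frontier_of_subset {s t : Set X} (hts : t ⊆ s)
    (hst : Disjoint (frontier s) (frontier t)) : Disjoint (frontier s) t := by
  refine Set.disjoint_left.2 fun x hxs hxt ↦ hxs.2 (interior_mono hts ?_)
  by_contra hint
  exact Set.disjoint_left.1 hst hxs ⟨subset_closure hxt, hint⟩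

lemma IsPreconnected.inter_frontier_nonempty_of_antitone {H : ℕ → Set X}
    (hcl : ∀ n, IsClosed (H n)) (hanti : Antitone H)
    (hdisj : ∀ n, Disjoint (frontier (H n)) (frontier (H (n + 1)))) {S : Set X}
    (hS : IsPreconnected S) {n m l : ℕ} (hnm : n < m) (hml : m < l)
    (hn : (S ∩ frontier (H n)).Nonempty) (hl : (S ∩ frontier (H l)).Nonempty) :
    (S ∩ frontier (H m)).Nonempty := by
  refine hS.inter_frontier_nonempty ?_ ?_
  · exact hl.mono fun x hx ↦ ⟨hx.1, hanti hml.le ((hcl l).frontier_subset hx.2)⟩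
  · have hout : Disjoint (frontier (H n)) (H (n + 1)) :=
      disjoint_frontier_of_subset (hanti n.le_succ) (hdisj n)
    exact hn.mono fun x hx ↦ ⟨hx.1, fun hxm ↦ Set.disjoint_left.1 hout hx.2 (hanti hnm hxm)⟩

end Frontier

lemma summable_exp_neg_mul_abs_int {a : ℝ} (ha : 0 < a) :
    Summable fun z : ℤ ↦ exp (-(a * |(z : ℝ)|)) := by
  have hnat : Summable fun n : ℕ ↦ exp (n * -a) := summable_exp_nat_mul_iff.2 (neg_lt_zero.2 ha)
  refine .of_nat_of_neg (hnat.congr fun n ↦ ?_) (hnat.congr fun n ↦ ?_) <;>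
    simp only [Int.cast_natCast, Int.cast_neg, abs_neg, Nat.abs_cast, mul_neg, mul_comm]

lemma sum_range_exp_neg_mul_abs_sub_le {a : ℝ} (ha : 0 < a) (N i : ℕ) :
    ∑ j ∈ Finset.range N, exp (-(a * |(j : ℝ) - i|)) ≤ ∑' z : ℤ, exp (-(a * |(z : ℝ)|)) := by
  have hinj : Set.InjOn (fun j : ℕ ↦ (j : ℤ) - i) (Finset.range N) := fun j _ j' _ h ↦ by
    simpa using h
  calc ∑ j ∈ Finset.range N, exp (-(a * |(j : ℝ) - i|))
      = ∑ z ∈ (Finset.range N).image fun j : ℕ ↦ (j : ℤ) - i, exp (-(a * |(z : ℝ)|)) := by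
        rw [Finset.sum_image hinj]
        push_cast
        rfl
    _ ≤ ∑' z : ℤ, exp (-(a * |(z : ℝ)|)) :=
        (summable_exp_neg_mul_abs_int ha).sum_le_tsum _ fun _ _ ↦ (exp_pos _).le

/-- Realised by the points `min (s + j) t` for `j ≤ ⌈t - s⌉₊`. -/
lemma exists_unit_step_chain {s t : ℝ} (hst : s ≤ t) :
    ∃ (N : ℕ) (u : ℕ → ℝ), u 0 = s ∧ u N = t ∧ (∀ j, |u (j + 1) - u j| ≤ 1) ∧
      ∀ i ≤ N, ∀ j ≤ N, |(i : ℝ) - j| ≤ |u i - u j| + 1 := by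
  set N := ⌈t - s⌉₊
  have hN : t - s ≤ N := Nat.le_ceil _
  have hN' : (N : ℝ) < t - s + 1 := Nat.ceil_lt_add_one (sub_nonneg.2 hst)
  have hu : ∀ j ≤ N, s + j - 1 ≤ min (s + j) t ∧ min (s + j) t ≤ s + j := fun j hj ↦ by
    have : (j : ℝ) ≤ N := by exact_mod_cast hj
    exact ⟨le_min (by linarith) (by linarith), min_le_left _ _⟩
  refine ⟨N, fun j ↦ min (s + j) t, by simp [hst], min_eq_right (by linarith), fun j ↦ ?_,
    fun i hi j hj ↦ ?_⟩
  · push_cast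
    rw [abs_le]
    constructor <;> cases min_cases (s + j) t <;> cases min_cases (s + (j + 1)) t <;> linarith
  · obtain ⟨hi₁, hi₂⟩ := hu i hi
    obtain ⟨hj₁, hj₂⟩ := hu j hj
    rw [abs_le] at *
    constructor <;> cases abs_cases (min (s + i) t - min (s + j) t) <;> linarith

lemma IsQuasigeodesicLine.dist_cayley_le {k c R : ℝ} {f : ℝ → ℍ}
    (hf : IsQuasigeodesicLine k c f) (hR : ∀ u, R ≤ dist (f u) I) (s t : ℝ) :
    dist (cayley (f s)) (cayley (f t)) ≤
      2 * exp ((k + c) / 2 + (1 / k + c) / 8) * (∑' z : ℤ, exp (-(1 / (8 * k) * |(z : ℝ)|))) *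
        exp (-R / 4) := by
  wlog hst : s ≤ t generalizing s t
  · rw [dist_comm]
    exact this t s (le_of_not_ge hst)
  obtain ⟨hk, hc, hqg⟩ := hf
  have hk₀ : 0 < k := by linarith
  obtain ⟨N, u, hu₀, huN, hstep, hgap⟩ := exists_unit_step_chain hst
  obtain ⟨i, hi, hmin⟩ := (Finset.range (N + 1)).exists_min_image (fun j ↦ dist (f (u j)) I)
    ⟨0, by simp⟩
  have hi : i ≤ N := Nat.lt_succ_iff.1 (Finset.mem_range.1 hi)
  -- average `R ≤ d_j` with `(|j - i| - 1) / k - c ≤ dist (f (u j)) (f (u i)) ≤ d_j + d_i ≤ 2 d_j`,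
  -- where `d_j = dist (f (u j)) I` and `d_i` is the least of these
  have hfar : ∀ j ≤ N, R / 2 + ((|(j : ℝ) - i| - 1) / k - c) / 4 ≤ dist (f (u j)) I := by
    intro j hj
    have hij : dist (f (u i)) I ≤ dist (f (u j)) I := hmin j (Finset.mem_range.2 (by omega))
    have htri : dist (f (u j)) (f (u i)) ≤ dist (f (u j)) I + dist (f (u i)) I :=
      dist_triangle_right _ _ _
    have hlow : (|(j : ℝ) - i| - 1) / k ≤ 1 / k * |u j - u i| := by
      rw [one_div_mul_eq_div]
      gcongr
      linarith [hgap j hj i hi]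
    linarith [(hqg (u j) (u i)).1, hR (u i)]
  have hterm : ∀ j ∈ Finset.range N, dist (cayley (f (u j))) (cayley (f (u (j + 1)))) ≤
      2 * exp ((k + c) / 2 + (1 / k + c) / 8) * exp (-R / 4) *
        exp (-(1 / (8 * k) * |(j : ℝ) - i|)) := by
    intro j hj
    have hj : j ≤ N := (Finset.mem_range.1 hj).le
    have hstep' : dist (f (u j)) (f (u (j + 1))) ≤ k + c := by
      have := (hqg (u j) (u (j + 1))).2
      rw [abs_sub_comm] at this
      nlinarith [hstep j]
    refine (dist_cayley_le_exp _ _).trans ?_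
    rw [mul_assoc, mul_assoc, ← exp_add, ← exp_add]
    gcongr
    have : 1 / (8 * k) * |(j : ℝ) - i| = |(j : ℝ) - i| / k / 8 := by ring
    have : (|(j : ℝ) - i| - 1) / k = |(j : ℝ) - i| / k - 1 / k := by ring
    linarith [hfar j hj, dist_nonneg (x := f (u (j + 1))) (y := I)]
  calc dist (cayley (f s)) (cayley (f t))
      ≤ ∑ j ∈ Finset.range N, dist (cayley (f (u j))) (cayley (f (u (j + 1)))) := by
        simpa only [hu₀, huN] using dist_le_range_sum_dist (fun j ↦ cayley (f (u j))) N
    _ ≤ ∑ j ∈ Finset.range N, 2 * exp ((k + c) / 2 + (1 / k + c) / 8) * exp (-R / 4) *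
          exp (-(1 / (8 * k) * |(j : ℝ) - i|)) := Finset.sum_le_sum hterm
    _ ≤ 2 * exp ((k + c) / 2 + (1 / k + c) / 8) * exp (-R / 4) *
          ∑' z : ℤ, exp (-(1 / (8 * k) * |(z : ℝ)|)) := by
        rw [← Finset.mul_sum]
        gcongr
        exact sum_range_exp_neg_mul_abs_sub_le (by positivity) N i
    _ = _ := by ring

lemma eventually_forall_le_dist_of_eventually_inter_eq_empty {X ι : Type*} [PseudoMetricSpace X]
    [ProperSpace X] {l : Filter ι} {S : ι → Set X}
    (hS : ∀ K, IsCompact K → ∀ᶠ n in l, S n ∩ K = ∅) (x : X) (R : ℝ) :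
    ∀ᶠ n in l, ∀ y ∈ S n, R ≤ dist y x := by
  filter_upwards [hS _ (isCompact_closedBall x R)] with n hn y hy
  by_contra! h
  exact Set.eq_empty_iff_forall_notMem.1 hn y ⟨hy, mem_closedBall.2 h.le⟩

lemma tendsto_norm_cayley_one {ι : Type*} {l : Filter ι} {z : ι → ℍ}
    (hz : Tendsto (fun n ↦ dist (z n) I) l atTop) : Tendsto (fun n ↦ ‖cayley (z n)‖) l (𝓝 1) := by
  have hexp : Tendsto (fun n ↦ 1 - exp (-(dist (z n) I / 2))) l (𝓝 1) := by
    simpa using tendsto_const_nhds.sub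
      (tendsto_exp_neg_atTop_nhds_zero.comp (hz.atTop_div_const two_pos))
  refine tendsto_of_tendsto_of_tendsto_of_le_of_le hexp tendsto_const_nhds (fun n ↦ ?_)
    fun n ↦ (norm_cayley_lt_one _).le
  linarith [one_sub_norm_cayley_le (z n)]

lemma eventually_dist_cayley_le {ι : Type*} {l : Filter ι} {k c : ℝ} {ℓ : ι → ℝ → ℍ}
    (hqg : ∀ n, IsQuasigeodesicLine k c (ℓ n)) (hfar : ∀ R, ∀ᶠ n in l, ∀ u, R ≤ dist (ℓ n u) I)
    {ε : ℝ} (hε : 0 < ε) : ∀ᶠ n in l, ∀ s t, dist (cayley (ℓ n s)) (cayley (ℓ n t)) ≤ ε := by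
  set C := 2 * exp ((k + c) / 2 + (1 / k + c) / 8) * ∑' z : ℤ, exp (-(1 / (8 * k) * |(z : ℝ)|))
  have hC : Tendsto (fun R ↦ C * exp (-R / 4)) atTop (𝓝 0) := by
    simpa using
      (tendsto_exp_atBot.comp (tendsto_neg_atTop_atBot.atBot_div_const four_pos)).const_mul C
  obtain ⟨R, hR⟩ := (hC.eventually (eventually_le_nhds hε)).exists
  filter_upwards [hfar R] with n hn s t
  exact ((hqg n).dist_cayley_le hn s t).trans hR

section Nested

variable {ℓ : ℕ → ℝ → ℍ} {H : ℕ → Set ℍ}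

lemma eq_of_mapClusterPt_cayley (hcl : ∀ n, IsClosed (H n)) (hanti : Antitone H)
    (hfr : ∀ n, frontier (H n) = Set.range (ℓ n))
    (hdisj : ∀ n, Disjoint (Set.range (ℓ n)) (Set.range (ℓ (n + 1))))
    (hsmall : ∀ ε > 0, ∀ᶠ n in atTop, ∀ s t, dist (cayley (ℓ n s)) (cayley (ℓ n t)) ≤ ε)
    {p q : ℂ} (hp : MapClusterPt p atTop fun n ↦ cayley (ℓ n 0))
    (hq : MapClusterPt q atTop fun n ↦ cayley (ℓ n 0)) : p = q := by
  by_contra hpq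
  set ε := dist p q / 3 with hε_def
  have hε : 0 < ε := by have := dist_pos.2 hpq; positivity
  have hp' := frequently_atTop.1 (mapClusterPt_iff_frequently.1 hp _ (ball_mem_nhds p hε))
  obtain ⟨M, hM⟩ := eventually_atTop.1 (hsmall ε hε)
  obtain ⟨n, hMn, hn⟩ := hp' M
  obtain ⟨m, hnm, hm⟩ :=
    frequently_atTop.1 (mapClusterPt_iff_frequently.1 hq _ (ball_mem_nhds q hε)) (n + 1)
  obtain ⟨l, hml, hl⟩ := hp' (m + 1)
  have hdisj' n : Disjoint (frontier (H n)) (frontier (H (n + 1))) := by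
    rw [hfr, hfr]; exact hdisj n
  obtain ⟨_, hz, hzm⟩ :=
    (isPreconnected_preimage_cayley (convex_ball p ε)).inter_frontier_nonempty_of_antitone
      hcl hanti hdisj' hnm hml (by rw [hfr]; exact ⟨_, hn, 0, rfl⟩)
      (by rw [hfr]; exact ⟨_, hl, 0, rfl⟩)
  obtain ⟨u, rfl⟩ := hfr m ▸ hzm
  have := dist_triangle4 p (cayley (ℓ m u)) (cayley (ℓ m 0)) q
  have := hM m (by omega) u 0
  linarith [mem_ball'.1 hz, mem_ball.1 hm]

lemma exists_tendsto_cayley (hcl : ∀ n, IsClosed (H n)) (hanti : Antitone H)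
    (hfr : ∀ n, frontier (H n) = Set.range (ℓ n))
    (hdisj : ∀ n, Disjoint (Set.range (ℓ n)) (Set.range (ℓ (n + 1))))
    (hsmall : ∀ ε > 0, ∀ᶠ n in atTop, ∀ s t, dist (cayley (ℓ n s)) (cayley (ℓ n t)) ≤ ε) :
    ∃ p, Tendsto (fun n ↦ cayley (ℓ n 0)) atTop (𝓝 p) := by
  have hx n : cayley (ℓ n 0) ∈ closedBall (0 : ℂ) 1 :=
    mem_closedBall_zero_iff.2 (norm_cayley_lt_one _).le
  obtain ⟨p, -, hp⟩ := (isCompact_closedBall (0 : ℂ) 1).exists_mapClusterPt (f := atTop)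
    (tendsto_principal.2 (.of_forall hx))
  exact ⟨p, (isCompact_closedBall 0 1).tendsto_nhds_of_unique_mapClusterPt (.of_forall hx)
    fun q _ hq ↦ eq_of_mapClusterPt_cayley hcl hanti hfr hdisj hsmall hq hp⟩

end Nested

/-- A sequence of pairwise disjoint, nested uniform quasigeodesic lines in the
hyperbolic plane that eventually leaves every compact set converges to a single
point `p` of the ideal circle: for every neighborhood `U` of `p` in the
compactified disk, `ℓₙ ⊆ U` for all large `n`.  Nested means each `ℓₙ₊₁` lies
in a closed half-plane bounded by `ℓₙ` (the half-planes decreasing). -/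
theorem nested_quasigeodesics_converge_to_ideal_point
    (k c : ℝ) (ℓ : ℕ → ℝ → UpperHalfPlane)
    (hqg : ∀ n, IsQuasigeodesicLine k c (ℓ n))
    (hdisj : ∀ m n, m ≠ n → Disjoint (Set.range (ℓ m)) (Set.range (ℓ n)))
    (hnested : ∃ H : ℕ → Set UpperHalfPlane, (∀ n, IsClosed (H n)) ∧
      (∀ n, frontier (H n) = Set.range (ℓ n)) ∧
      (∀ n, Set.range (ℓ (n + 1)) ⊆ H n) ∧ (∀ n, H (n + 1) ⊆ H n))
    (hescape : ∀ K : Set UpperHalfPlane, IsCompact K →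
      ∀ᶠ n in Filter.atTop, Set.range (ℓ n) ∩ K = ∅) :
    ∃ p ∈ Metric.sphere (0 : ℂ) 1, ∀ U ∈ nhds p,
      ∀ᶠ n in Filter.atTop, cayley '' Set.range (ℓ n) ⊆ U := by
  obtain ⟨H, hcl, hfr, -, hsucc⟩ := hnested
  have hfar R : ∀ᶠ n in atTop, ∀ u, R ≤ dist (ℓ n u) I :=
    (eventually_forall_le_dist_of_eventually_inter_eq_empty hescape I R).mono
      fun n hn u ↦ hn _ ⟨u, rfl⟩
  have hsmall ε (hε : 0 < ε) := eventually_dist_cayley_le hqg hfar hε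
  obtain ⟨p, hp⟩ := exists_tendsto_cayley hcl (antitone_nat_of_succ_le hsucc) hfr
    (fun n ↦ hdisj n (n + 1) n.succ_ne_self.symm) hsmall
  have hnorm := tendsto_norm_cayley_one (tendsto_atTop.2 fun R ↦ (hfar R).mono fun n hn ↦ hn 0)
  refine ⟨p, mem_sphere_zero_iff_norm.2 (tendsto_nhds_unique hp.norm hnorm), fun U hU ↦ ?_⟩
  obtain ⟨ε, hε, hball⟩ := Metric.mem_nhds_iff.1 hU
  filter_upwards [hsmall (ε / 2) (half_pos hε), hp (ball_mem_nhds p (half_pos hε))] with n hn hpn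
  rintro _ ⟨_, ⟨u, rfl⟩, rfl⟩
  apply hball
  rw [mem_ball]
  linarith [dist_triangle (cayley (ℓ n u)) (cayley (ℓ n 0)) p, hn u 0, mem_ball.1 hpn]
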